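/- Let I be the padded instance of an SMI instance I', let M' be a semi-WSNM of I with maximum pair (m_{i'}, w_{j'}), and let (m_i, w_j) be an acceptable pair with i' < i and j' < j such that (m_{i'}, w_{j'}) and (m_i, w_j) are nonconflicting. Then M = M' ∪ {(m_i, w_j)} is a semi-WSNM of I with maximum pair (m_i, w_j) and |M| = |M'| + 1. -/

import Mathlib

open scoped Classical

/-- An SMTI instance: men of type `Mty`, women of type `Wty`.
`mpref m w = some r` means `w` appears on `m`'s preference list with rank `r`
(smaller rank = more preferred; equal ranks = tied); `none` means `w` is not on `m`'s list.
Similarly for `wpref`.  A pair is acceptable when each lists the other. -/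
structure SMTI (Mty : Type) (Wty : Type) where
  mpref : Mty → Wty → Option ℕ
  wpref : Wty → Mty → Option ℕ

namespace SMTI

variable {Mty Wty : Type}

/-- Rank of an optional preference-list entry: `⊤` for an absent entry
(so that being single / unacceptable is worse than any listed partner). -/
def rk (o : Option ℕ) : ℕ∞ := o.elim ⊤ (fun r => (r : ℕ∞))

/-- `(m, w)` is an acceptable pair. -/
def Acc (I : SMTI Mty Wty) (m : Mty) (w : Wty) : Prop :=
  (I.mpref m w).isSome ∧ (I.wpref w m).isSome

/-- `M` is a matching: a set of acceptable pairs in which each person appears at most once. -/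
def IsMatching (I : SMTI Mty Wty) (M : Finset (Mty × Wty)) : Prop :=
  (∀ p ∈ M, I.Acc p.1 p.2) ∧
  (∀ p ∈ M, ∀ q ∈ M, (p.1 = q.1 ∨ p.2 = q.2) → p = q)

/-- Two pairs cross iff one pair's man is above the other pair's man
while its woman is below the other pair's woman. -/
def Crossing [Preorder Mty] [Preorder Wty] (p q : Mty × Wty) : Prop :=
  (p.1 < q.1 ∧ q.2 < p.2) ∨ (q.1 < p.1 ∧ p.2 < q.2)

/-- A set of pairs is noncrossing if no two of its pairs cross. -/
def Noncrossing [Preorder Mty] [Preorder Wty] (M : Finset (Mty × Wty)) : Prop :=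
  ∀ p ∈ M, ∀ q ∈ M, ¬ Crossing p q

/-- `(m, w)` is a (weak) blocking pair for `M`: an acceptable pair not in `M`
such that `m` strictly prefers `w` to his partner in `M` (or is single) and
`w` strictly prefers `m` to her partner in `M` (or is single). -/
def Blocks (I : SMTI Mty Wty) (M : Finset (Mty × Wty)) (m : Mty) (w : Wty) : Prop :=
  I.Acc m w ∧ (m, w) ∉ M ∧
  (∀ w', (m, w') ∈ M → rk (I.mpref m w) < rk (I.mpref m w')) ∧
  (∀ m', (m', w) ∈ M → rk (I.wpref w m) < rk (I.wpref w m'))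

/-- A noncrossing (weak) blocking pair: a blocking pair crossing no pair of `M`. -/
def NCBlocks [Preorder Mty] [Preorder Wty] (I : SMTI Mty Wty) (M : Finset (Mty × Wty))
    (m : Mty) (w : Wty) : Prop :=
  I.Blocks M m w ∧ ∀ q ∈ M, ¬ Crossing (m, w) q

/-- A strongly stable noncrossing matching (for SMTI in the weak-stability sense:
a weak-SSNM): a noncrossing matching admitting no (weak) blocking pair at all. -/
def IsSSNM [Preorder Mty] [Preorder Wty] (I : SMTI Mty Wty) (M : Finset (Mty × Wty)) : Prop :=
  I.IsMatching M ∧ Noncrossing M ∧ ∀ m w, ¬ I.Blocks M m w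

/-- A weakly stable noncrossing matching: a noncrossing matching admitting
no noncrossing (weak) blocking pair. -/
def IsWSNM [Preorder Mty] [Preorder Wty] (I : SMTI Mty Wty) (M : Finset (Mty × Wty)) : Prop :=
  I.IsMatching M ∧ Noncrossing M ∧ ∀ m w, ¬ I.NCBlocks M m w

/-- The instance has strict preference lists (no ties), i.e. it is an SMI instance. -/
def NoTies (I : SMTI Mty Wty) : Prop :=
  (∀ m w w', (I.mpref m w).isSome → I.mpref m w = I.mpref m w' → w = w') ∧
  (∀ w m m', (I.wpref w m).isSome → I.wpref w m = I.wpref w m' → m = m')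

end SMTI

namespace SMTI

variable {Mty Wty : Type}

/-- `opt I`: the maximum cardinality of a WSNM of `I`. -/
noncomputable def opt [Preorder Mty] [Preorder Wty] (I : SMTI Mty Wty) : ℕ :=
  sSup {k | ∃ M, I.IsWSNM M ∧ M.card = k}

/-- `p` is the maximum pair of `M`:  it belongs to `M` and dominates every pair
of `M` in both coordinates. -/
def IsMaxPair [Preorder Mty] [Preorder Wty] (M : Finset (Mty × Wty)) (p : Mty × Wty) : Prop :=
  p ∈ M ∧ ∀ q ∈ M, q.1 ≤ p.1 ∧ q.2 ≤ p.2

/-- `M` is a semi-WSNM with maximum pair `p`: a noncrossing matching whose maximum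
pair is `p` and all of whose noncrossing blocking pairs lie (weakly) beyond `p` in
both coordinates. -/
def IsSemiWSNMWith [Preorder Mty] [Preorder Wty] (I : SMTI Mty Wty)
    (M : Finset (Mty × Wty)) (p : Mty × Wty) : Prop :=
  I.IsMatching M ∧ Noncrossing M ∧ IsMaxPair M p ∧
    ∀ m w, I.NCBlocks M m w → p.1 ≤ m ∧ p.2 ≤ w

/-- `M` is a semi-WSNM (with some maximum pair). -/
def IsSemiWSNM [Preorder Mty] [Preorder Wty] (I : SMTI Mty Wty)
    (M : Finset (Mty × Wty)) : Prop :=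
  ∃ p, I.IsSemiWSNMWith M p

/-- The padded instance: new man `m₀` and woman `w₀` on top, new man `m_{n+1}` and
woman `w_{n+1}` at the bottom; `m₀` and `w₀` list only each other, and so do
`m_{n+1}` and `w_{n+1}`; all other lists are as in the original instance
(original person `i`, `1 ≤ i ≤ n`, becomes index `i` of `Fin (n+2)`). -/
def padded {n : ℕ} (I : SMTI (Fin n) (Fin n)) : SMTI (Fin (n + 2)) (Fin (n + 2)) where
  mpref m w :=
    if hm : 0 < m.val ∧ m.val < n + 1 then
      if hw : 0 < w.val ∧ w.val < n + 1 then
        I.mpref ⟨m.val - 1, by omega⟩ ⟨w.val - 1, by omega⟩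
      else none
    else if (m.val = 0 ∧ w.val = 0) ∨ (m.val = n + 1 ∧ w.val = n + 1) then some 0
    else none
  wpref w m :=
    if hw : 0 < w.val ∧ w.val < n + 1 then
      if hm : 0 < m.val ∧ m.val < n + 1 then
        I.wpref ⟨w.val - 1, by omega⟩ ⟨m.val - 1, by omega⟩
      else none
    else if (m.val = 0 ∧ w.val = 0) ∨ (m.val = n + 1 ∧ w.val = n + 1) then some 0
    else none

/-- The embedding of a pair of the original instance into the padded instance. -/
def emb {n : ℕ} (p : Fin n × Fin n) : Fin (n + 2) × Fin (n + 2) :=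
  (⟨p.1.val + 1, by omega⟩, ⟨p.2.val + 1, by omega⟩)

/-- Pairs `p` and `q` (with `p.1 < q.1` and `p.2 < q.2`) are conflicting if the
matching `{p, q}` admits a blocking pair lying between them in both coordinates. -/
def Conflicting {nm nw : ℕ} (I : SMTI (Fin nm) (Fin nw)) (p q : Fin nm × Fin nw) : Prop :=
  ∃ s t, I.Blocks {p, q} s t ∧ p.1 ≤ s ∧ s ≤ q.1 ∧ p.2 ≤ t ∧ t ≤ q.2

/-- `X I i j`: the maximum size of a semi-WSNM of `I` with maximum pair `(m_i, w_j)`,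
or `⊥` (i.e. `−∞`) if none exists. -/
noncomputable def X {nm nw : ℕ} (I : SMTI (Fin nm) (Fin nw)) (i : Fin nm) (j : Fin nw) :
    WithBot ℕ :=
  if ∃ M, I.IsSemiWSNMWith M (i, j) then
    ((sSup {k | ∃ M, I.IsSemiWSNMWith M (i, j) ∧ M.card = k} : ℕ) : WithBot ℕ)
  else ⊥

end SMTI

namespace SMTI

theorem Blocks.of_subset {Mty Wty : Type} {I : SMTI Mty Wty} {M N : Finset (Mty × Wty)}
    {m : Mty} {w : Wty} (h : I.Blocks N m w) (hMN : M ⊆ N) : I.Blocks M m w :=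
  ⟨h.1, fun hM => h.2.1 (hMN hM), fun w' hw' => h.2.2.1 w' (hMN hw'),
    fun m' hm' => h.2.2.2 m' (hMN hm')⟩

section Preorder

variable {Mty Wty : Type} [Preorder Mty] [Preorder Wty]

theorem NCBlocks.of_subset {I : SMTI Mty Wty} {M N : Finset (Mty × Wty)} {m : Mty} {w : Wty}
    (h : I.NCBlocks N m w) (hMN : M ⊆ N) : I.NCBlocks M m w :=
  ⟨h.1.of_subset hMN, fun q hq => h.2 q (hMN hq)⟩

theorem IsMaxPair.forall_lt {M : Finset (Mty × Wty)} {p' p : Mty × Wty} (h : IsMaxPair M p')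
    (h1 : p'.1 < p.1) (h2 : p'.2 < p.2) : ∀ q ∈ M, q.1 < p.1 ∧ q.2 < p.2 :=
  fun q hq => ⟨(h.2 q hq).1.trans_lt h1, (h.2 q hq).2.trans_lt h2⟩

variable [DecidableEq (Mty × Wty)] {M : Finset (Mty × Wty)} {p : Mty × Wty}

theorem IsMatching.insert_of_forall_lt {I : SMTI Mty Wty} (hM : I.IsMatching M)
    (hacc : I.Acc p.1 p.2) (hlt : ∀ q ∈ M, q.1 < p.1 ∧ q.2 < p.2) :
    I.IsMatching (insert p M) := by
  refine ⟨fun q hq => ?_, fun a ha b hb hab => ?_⟩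
  · rcases Finset.mem_insert.mp hq with rfl | hq
    exacts [hacc, hM.1 q hq]
  rcases Finset.mem_insert.mp ha with rfl | haM <;> rcases Finset.mem_insert.mp hb with rfl | hbM
  · rfl
  · obtain ⟨hb1, hb2⟩ := hlt b hbM
    exact hab.elim (fun e => (hb1.ne' e).elim) (fun e => (hb2.ne' e).elim)
  · obtain ⟨ha1, ha2⟩ := hlt a haM
    exact hab.elim (fun e => (ha1.ne e).elim) (fun e => (ha2.ne e).elim)
  · exact hM.2 a haM b hbM hab

theorem Noncrossing.insert_of_forall_lt (hM : Noncrossing M)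
    (hlt : ∀ q ∈ M, q.1 < p.1 ∧ q.2 < p.2) : Noncrossing (insert p M) := by
  have not_crossing : ∀ q ∈ M, ¬ Crossing p q := fun q hq hcr => by
    obtain ⟨hq1, hq2⟩ := hlt q hq
    rcases hcr with ⟨h, _⟩ | ⟨_, h⟩
    exacts [h.not_gt hq1, h.not_gt hq2]
  intro a ha b hb
  rcases Finset.mem_insert.mp ha with rfl | haM <;> rcases Finset.mem_insert.mp hb with rfl | hbM
  · rintro (⟨h, _⟩ | ⟨h, _⟩) <;> exact lt_irrefl _ h
  · exact not_crossing b hbM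
  · exact fun hcr => not_crossing a haM (Or.symm hcr)
  · exact hM a haM b hbM

theorem IsMaxPair.insert_of_forall_lt (hlt : ∀ q ∈ M, q.1 < p.1 ∧ q.2 < p.2) :
    IsMaxPair (insert p M) p := by
  refine ⟨Finset.mem_insert_self p M, fun q hq => ?_⟩
  rcases Finset.mem_insert.mp hq with rfl | hq
  exacts [⟨le_rfl, le_rfl⟩, ⟨(hlt q hq).1.le, (hlt q hq).2.le⟩]

end Preorder

theorem le_of_not_crossing_of_not_le {Mty Wty : Type} [LinearOrder Mty] [LinearOrder Wty]
    {m : Mty} {w : Wty} {p : Mty × Wty} (hcr : ¬ Crossing (m, w) p)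
    (hbeyond : ¬ (p.1 ≤ m ∧ p.2 ≤ w)) : m ≤ p.1 ∧ w ≤ p.2 := by
  simp only [Crossing, not_or, not_and, not_lt] at hcr hbeyond
  rcases lt_trichotomy m p.1 with hm | rfl | hm
  · exact ⟨hm.le, hcr.1 hm⟩
  · exact ⟨le_rfl, (lt_of_not_ge (hbeyond le_rfl)).le⟩
  · exact absurd (hcr.2 hm) (hbeyond hm.le)

/-- A noncrossing blocking pair of `insert p M'` not beyond `p` lies in the box spanned by
`p'` and `p`, where it would block `{p', p}`. -/
theorem IsSemiWSNMWith.insert_of_not_conflicting {nm nw : ℕ} {I : SMTI (Fin nm) (Fin nw)}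
    {M' : Finset (Fin nm × Fin nw)} {p' p : Fin nm × Fin nw} (h : I.IsSemiWSNMWith M' p')
    (hacc : I.Acc p.1 p.2) (h1 : p'.1 < p.1) (h2 : p'.2 < p.2)
    (hnc : ¬ I.Conflicting p' p) : I.IsSemiWSNMWith (insert p M') p := by
  obtain ⟨hmatch, hcross, hmax, hsemi⟩ := h
  have hlt := hmax.forall_lt h1 h2
  refine ⟨hmatch.insert_of_forall_lt hacc hlt, hcross.insert_of_forall_lt hlt,
    IsMaxPair.insert_of_forall_lt hlt, fun m w hblock => ?_⟩
  by_contra hbeyond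
  obtain ⟨hm', hw'⟩ := hsemi m w (hblock.of_subset (Finset.subset_insert p M'))
  obtain ⟨hm, hw⟩ :=
    le_of_not_crossing_of_not_le (hblock.2 p (Finset.mem_insert_self p M')) hbeyond
  have hpair : ({p', p} : Finset _) ⊆ insert p M' := by
    rw [Finset.pair_comm]
    exact Finset.insert_subset_insert p (Finset.singleton_subset_iff.mpr hmax.1)
  exact hnc ⟨m, w, hblock.1.of_subset hpair, hm', hm, hw', hw⟩

end SMTI

theorem stmt14_general {n : ℕ} (I' : SMTI (Fin n) (Fin n))
    (M' : Finset (Fin (n + 2) × Fin (n + 2))) (p' p : Fin (n + 2) × Fin (n + 2))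
    (h : (SMTI.padded I').IsSemiWSNMWith M' p')
    (hacc : (SMTI.padded I').Acc p.1 p.2)
    (h1 : p'.1 < p.1) (h2 : p'.2 < p.2)
    (hnc : ¬ (SMTI.padded I').Conflicting p' p) :
    (SMTI.padded I').IsSemiWSNMWith (insert p M') p ∧
      (insert p M').card = M'.card + 1 :=
  ⟨h.insert_of_not_conflicting hacc h1 h2 hnc,
    Finset.card_insert_of_notMem fun hp => lt_irrefl _ ((h.2.2.1.forall_lt h1 h2 p hp).1)⟩

/-- adding to a semi-WSNM `M'` (with maximum pair `p'`) an acceptable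
pair `p` beyond `p'` in both coordinates and nonconflicting with `p'` yields a
semi-WSNM with maximum pair `p`, of size `|M'| + 1`. -/
theorem stmt14 {n : ℕ} (I' : SMTI (Fin n) (Fin n)) (hI' : I'.NoTies)
    (M' : Finset (Fin (n + 2) × Fin (n + 2))) (p' p : Fin (n + 2) × Fin (n + 2))
    (h : (SMTI.padded I').IsSemiWSNMWith M' p')
    (hacc : (SMTI.padded I').Acc p.1 p.2)
    (h1 : p'.1 < p.1) (h2 : p'.2 < p.2)
    (hnc : ¬ (SMTI.padded I').Conflicting p' p) :
    (SMTI.padded I').IsSemiWSNMWith (insert p M') p ∧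
      (insert p M').card = M'.card + 1 :=
  stmt14_general I' M' p' p h hacc h1 h2 hnc
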